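/- arXiv:2302.05388 — 2 statements merged into one kernel-verified Lean document; each statement's English description precedes it below -/
import Mathlib

section
/- The cofinality cof(FIN^{n+1}) equals 𝔡 for every n ≥ 1. -/
/-- `f ≤* g` : eventual domination. -/
def LeStar (f g : ℕ → ℕ) : Prop := {n | g n < f n}.Finite

/-- The dominating number 𝔡. -/
noncomputable def dNumber : Cardinal :=
  sInf {c | ∃ F : Set (ℕ → ℕ), Cardinal.mk F = c ∧ ∀ g : ℕ → ℕ, ∃ f ∈ F, LeStar g f}

/-- `FINpow n` is the Fubini power `FIN^(n+1)`, an ideal on `ω^(n+1)`. -/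
def FINpow : (n : ℕ) → Set (Set (Fin (n + 1) → ℕ))
  | 0 => {A | A.Finite}
  | n + 1 => {A | {s : Fin (n + 1) → ℕ | {m : ℕ | Fin.snoc s m ∈ A}.Infinite} ∈ FINpow n}

/-- The cofinality of an ideal `I`: the least size of a generating (cofinal) subfamily. -/
noncomputable def idealCof {α : Type*} (I : Set (Set α)) : Cardinal :=
  sInf {c | ∃ J : Set (Set α), J ⊆ I ∧ Cardinal.mk J = c ∧
    ∀ A ∈ I, ∃ X ∈ J, A ⊆ X}

-- basic lemmas
lemma finpow_finite : ∀ n, ∀ S : Set (Fin (n+1) → ℕ), S.Finite → S ∈ FINpow n := by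
  intro n
  induction n with
  | zero => intro S hS; exact hS
  | succ n ih =>
    intro S hS
    have h : {s : Fin (n + 1) → ℕ | {m : ℕ | Fin.snoc s m ∈ S}.Infinite} = ∅ := by
      ext s
      simp only [Set.mem_setOf_eq, Set.mem_empty_iff_false, iff_false]
      intro hinf
      have hinj : Function.Injective (fun m : ℕ => Fin.snoc s m : ℕ → Fin (n+2) → ℕ) := by
        intro a b hab
        have := congrArg (fun t => t (Fin.last (n+1))) hab
        simpa using this
      exact hinf (hS.preimage (hinj.injOn))
    change FINpow (n + 1) S
    show {s : Fin (n + 1) → ℕ | {m : ℕ | Fin.snoc s m ∈ S}.Infinite} ∈ FINpow n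
    rw [h]
    exact ih ∅ (Set.finite_empty)

lemma finpow_empty (n : ℕ) : (∅ : Set (Fin (n+1) → ℕ)) ∈ FINpow n :=
  finpow_finite n ∅ Set.finite_empty

lemma finpow_union : ∀ n, ∀ S T : Set (Fin (n+1) → ℕ),
    S ∈ FINpow n → T ∈ FINpow n → S ∪ T ∈ FINpow n := by
  intro n
  induction n with
  | zero => intro S T hS hT; exact Set.Finite.union hS hT
  | succ n ih =>
    intro S T hS hT
    show {s : Fin (n + 1) → ℕ | {m : ℕ | Fin.snoc s m ∈ S ∪ T}.Infinite} ∈ FINpow n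
    have h : {s : Fin (n + 1) → ℕ | {m : ℕ | Fin.snoc s m ∈ S ∪ T}.Infinite}
        = {s | {m : ℕ | Fin.snoc s m ∈ S}.Infinite} ∪ {s | {m : ℕ | Fin.snoc s m ∈ T}.Infinite} := by
      ext s
      simp only [Set.mem_setOf_eq, Set.mem_union]
      constructor
      · intro h
        have h' : ({m | Fin.snoc s m ∈ S} ∪ {m | Fin.snoc s m ∈ T} : Set ℕ).Infinite :=
          h.mono (fun m hm => hm)
        exact Set.infinite_union.mp h'
      · rintro (h | h)
        · exact h.mono (fun m hm => Or.inl hm)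
        · exact h.mono (fun m hm => Or.inr hm)
    rw [h]
    exact ih _ _ hS hT
-- sup of a finite set of naturals
open Classical in
noncomputable def fsup (S : Set ℕ) : ℕ := if h : S.Finite then h.toFinset.sup id else 0

lemma le_fsup {S : Set ℕ} (h : S.Finite) {m : ℕ} (hm : m ∈ S) : m ≤ fsup S := by
  rw [fsup, dif_pos h]
  exact Finset.le_sup (f := id) (h.mem_toFinset.mpr hm)

-- hyperplane lemma
lemma finpow_hyper : ∀ n, ∀ B : Set (Fin (n+1) → ℕ), B ∈ FINpow n →
    {a : ℕ | ∀ s : Fin (n+1) → ℕ, s 0 = a → s ∈ B}.Finite := by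
  intro n
  induction n with
  | zero =>
    intro B hB
    have : {a : ℕ | ∀ s : Fin 1 → ℕ, s 0 = a → s ∈ B} ⊆ (fun s : Fin 1 → ℕ => s 0) '' B := by
      intro a ha
      exact ⟨fun _ => a, ha (fun _ => a) rfl, rfl⟩
    exact (hB.image _).subset this
  | succ n ih =>
    intro B hB
    have hB' : {s : Fin (n + 1) → ℕ | {m : ℕ | Fin.snoc s m ∈ B}.Infinite} ∈ FINpow n := hB
    have hsub : {a : ℕ | ∀ s : Fin (n+2) → ℕ, s 0 = a → s ∈ B} ⊆
        {a : ℕ | ∀ u : Fin (n+1) → ℕ, u 0 = a → u ∈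
          {s : Fin (n + 1) → ℕ | {m : ℕ | Fin.snoc s m ∈ B}.Infinite}} := by
      intro a ha u hu
      have : {m : ℕ | Fin.snoc u m ∈ B} = Set.univ := by
        ext m
        simp only [Set.mem_setOf_eq, Set.mem_univ, iff_true]
        apply ha
        have : (Fin.snoc u m : Fin (n+2) → ℕ) 0 = u 0 := by
          have := Fin.snoc_castSucc (α := fun _ : Fin (n+2) => ℕ) m u 0
          simpa using this
        rw [this, hu]
      show {m : ℕ | Fin.snoc u m ∈ B}.Infinite
      rw [this]; exact Set.infinite_univ
    exact (ih _ hB').subset hsub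

-- dNumber facts
lemma dSet_nonempty :
    {c | ∃ F : Set (ℕ → ℕ), Cardinal.mk F = c ∧ ∀ g : ℕ → ℕ, ∃ f ∈ F, LeStar g f}.Nonempty := by
  refine ⟨_, Set.univ, rfl, fun g => ⟨g, Set.mem_univ g, ?_⟩⟩
  have : {n | g n < g n} = (∅ : Set ℕ) := by ext n; simp
  rw [LeStar, this]; exact Set.finite_empty

lemma exists_dom_family : ∃ F : Set (ℕ → ℕ), Cardinal.mk F = dNumber ∧
    ∀ g : ℕ → ℕ, ∃ f ∈ F, LeStar g f := by
  have := csInf_mem dSet_nonempty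
  obtain ⟨F, hF, hdom⟩ := this
  exact ⟨F, hF, hdom⟩

lemma aleph0_le_dNumber : Cardinal.aleph0 ≤ dNumber := by
  refine le_csInf dSet_nonempty ?_
  rintro c ⟨F, hF, hdom⟩
  by_contra hc
  push_neg at hc
  rw [← hF] at hc
  have hfin : F.Finite := by
    rwa [Cardinal.lt_aleph0_iff_set_finite] at hc
  set g : ℕ → ℕ := fun n => hfin.toFinset.sup (fun f => f n) + 1 with hg
  obtain ⟨f, hfF, hls⟩ := hdom g
  have : {n | f n < g n} = Set.univ := by
    ext n
    simp only [Set.mem_setOf_eq, Set.mem_univ, iff_true, hg]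
    exact Nat.lt_succ_of_le (Finset.le_sup (f := fun f => f n) (hfin.mem_toFinset.mpr hfF))
  rw [LeStar, this] at hls
  exact Set.infinite_univ hls
lemma snoc_zero (k : ℕ) (s : Fin (k+1) → ℕ) (m : ℕ) :
    (Fin.snoc s m : Fin (k+2) → ℕ) 0 = s 0 := by
  have := Fin.snoc_castSucc (α := fun _ : Fin (k+2) => ℕ) m s 0
  simpa using this

def Af (k : ℕ) (f : ℕ → ℕ) : Set (Fin (k+2) → ℕ) := {t | t (Fin.last (k+1)) ≤ f (t 0)}

lemma Af_mem (k : ℕ) (f : ℕ → ℕ) : Af k f ∈ FINpow (k+1) := by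
  show {s : Fin (k + 1) → ℕ | {m : ℕ | Fin.snoc s m ∈ Af k f}.Infinite} ∈ FINpow k
  have h : {s : Fin (k + 1) → ℕ | {m : ℕ | Fin.snoc s m ∈ Af k f}.Infinite} = ∅ := by
    ext s
    simp only [Set.mem_setOf_eq, Set.mem_empty_iff_false, iff_false]
    intro hinf
    apply hinf
    have hsub : {m : ℕ | Fin.snoc s m ∈ Af k f} ⊆ Set.Iic (f (s 0)) := by
      intro m hm
      have : (Fin.snoc s m : Fin (k+2) → ℕ) (Fin.last (k+1)) ≤ f ((Fin.snoc s m : Fin (k+2) → ℕ) 0) := hm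
      rwa [Fin.snoc_last, snoc_zero] at this
    exact (Set.finite_Iic _).subset hsub
  rw [h]
  exact finpow_empty k

open Classical in
noncomputable def gfun (k : ℕ) (X : Set (Fin (k+2) → ℕ)) (a : ℕ) : ℕ :=
  if h : ∃ s : Fin (k+1) → ℕ, s 0 = a ∧ {m : ℕ | Fin.snoc s m ∈ X}.Finite
  then fsup {m : ℕ | Fin.snoc h.choose m ∈ X} else 0

lemma d_le_gen (k : ℕ) (J : Set (Set (Fin (k+2) → ℕ))) (hJ : J ⊆ FINpow (k+1))
    (hcov : ∀ A ∈ FINpow (k+1), ∃ X ∈ J, A ⊆ X) : dNumber ≤ Cardinal.mk J := by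
  have hdom : ∀ f : ℕ → ℕ, ∃ g ∈ (gfun k) '' J, LeStar f g := by
    intro f
    obtain ⟨X, hXJ, hAX⟩ := hcov (Af k f) (Af_mem k f)
    refine ⟨gfun k X, ⟨X, hXJ, rfl⟩, ?_⟩
    have hBX : {s : Fin (k + 1) → ℕ | {m : ℕ | Fin.snoc s m ∈ X}.Infinite} ∈ FINpow k := hJ hXJ
    have hfin := finpow_hyper k _ hBX
    refine hfin.subset ?_
    intro a ha
    simp only [Set.mem_setOf_eq] at ha ⊢
    intro s hs
    by_contra hsB
    have hsec : {m : ℕ | Fin.snoc s m ∈ X}.Finite := Set.not_infinite.mp hsB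
    have hex : ∃ s : Fin (k+1) → ℕ, s 0 = a ∧ {m : ℕ | Fin.snoc s m ∈ X}.Finite := ⟨s, hs, hsec⟩
    have hg : gfun k X a = fsup {m : ℕ | Fin.snoc hex.choose m ∈ X} := by
      rw [gfun, dif_pos hex]
    obtain ⟨hc0, hcfin⟩ := hex.choose_spec
    have hmem : f a ∈ {m : ℕ | Fin.snoc hex.choose m ∈ X} := by
      apply hAX
      show (Fin.snoc hex.choose (f a) : Fin (k+2) → ℕ) (Fin.last (k+1)) ≤
        f ((Fin.snoc hex.choose (f a) : Fin (k+2) → ℕ) 0)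
      rw [Fin.snoc_last, snoc_zero, hc0]
    have := le_fsup hcfin hmem
    rw [← hg] at this
    exact absurd ha (not_lt.mpr this)
  calc dNumber ≤ Cardinal.mk ((gfun k) '' J) := csInf_le' ⟨(gfun k) '' J, rfl, hdom⟩
    _ ≤ Cardinal.mk J := Cardinal.mk_image_le
def liftSet (n : ℕ) (Y : Set (Fin (n+1) → ℕ)) (E : Finset (Fin (n+1) → ℕ))
    (g : (Fin (n+1) → ℕ) → ℕ) : Set (Fin (n+2) → ℕ) :=
  {t | Fin.init t ∈ Y ∪ ↑E ∨ t (Fin.last (n+1)) ≤ g (Fin.init t)}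

lemma snoc_mem_liftSet (n : ℕ) (Y : Set (Fin (n+1) → ℕ)) (E : Finset (Fin (n+1) → ℕ))
    (g : (Fin (n+1) → ℕ) → ℕ) (s : Fin (n+1) → ℕ) (m : ℕ) :
    Fin.snoc s m ∈ liftSet n Y E g ↔ s ∈ Y ∪ ↑E ∨ m ≤ g s := by
  show (Fin.init (Fin.snoc s m : Fin (n+2) → ℕ) ∈ Y ∪ ↑E ∨
    (Fin.snoc s m : Fin (n+2) → ℕ) (Fin.last (n+1)) ≤ g (Fin.init (Fin.snoc s m : Fin (n+2) → ℕ)))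
    ↔ s ∈ Y ∪ ↑E ∨ m ≤ g s
  rw [Fin.init_snoc, Fin.snoc_last]

lemma liftSet_mem (n : ℕ) (Y : Set (Fin (n+1) → ℕ)) (E : Finset (Fin (n+1) → ℕ))
    (g : (Fin (n+1) → ℕ) → ℕ) (hY : Y ∈ FINpow n) : liftSet n Y E g ∈ FINpow (n+1) := by
  show {s : Fin (n + 1) → ℕ | {m : ℕ | Fin.snoc s m ∈ liftSet n Y E g}.Infinite} ∈ FINpow n
  have hsec : {s : Fin (n + 1) → ℕ | {m : ℕ | Fin.snoc s m ∈ liftSet n Y E g}.Infinite}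
      = Y ∪ ↑E := by
    ext s
    simp only [Set.mem_setOf_eq]
    constructor
    · intro hinf
      by_contra hs
      apply hinf
      refine (Set.finite_Iic (g s)).subset ?_
      intro m hm
      rcases (snoc_mem_liftSet n Y E g s m).mp hm with h | h
      · exact absurd h hs
      · exact h
    · intro hs
      have huniv : {m : ℕ | Fin.snoc s m ∈ liftSet n Y E g} = Set.univ := by
        ext m
        simp only [Set.mem_setOf_eq, Set.mem_univ, iff_true]
        exact (snoc_mem_liftSet n Y E g s m).mpr (Or.inl hs)
      rw [huniv]; exact Set.infinite_univ
  rw [hsec]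
  exact finpow_union n Y ↑E hY (finpow_finite n ↑E E.finite_toSet)

lemma genFamily : ∀ n, ∃ J : Set (Set (Fin (n+1) → ℕ)), J ⊆ FINpow n ∧
    Cardinal.mk J ≤ dNumber ∧ ∀ A ∈ FINpow n, ∃ X ∈ J, A ⊆ X := by
  intro n
  induction n with
  | zero =>
    refine ⟨FINpow 0, subset_rfl, ?_, fun A hA => ⟨A, hA, subset_rfl⟩⟩
    refine le_trans ?_ aleph0_le_dNumber
    have hc : (FINpow 0 : Set (Set (Fin 1 → ℕ))).Countable := by
      have h1 := Set.countable_setOf_finite_subset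
        (Set.countable_univ : (Set.univ : Set (Fin 1 → ℕ)).Countable)
      refine h1.mono ?_
      intro A hA
      exact ⟨hA, Set.subset_univ A⟩
    have := hc.to_subtype
    exact Cardinal.mk_le_aleph0
  | succ n ih =>
    obtain ⟨J, hJsub, hJcard, hJcov⟩ := ih
    obtain ⟨F₀, hF₀card, hF₀dom⟩ := exists_dom_family
    have hDeq : Nonempty ((Fin (n+1) → ℕ) ≃ ℕ) := by
      rw [← Cardinal.eq, Cardinal.mk_eq_aleph0, Cardinal.mk_nat]
    obtain ⟨e⟩ := hDeq
    refine ⟨(fun p : (Set (Fin (n+1) → ℕ) × Finset (Fin (n+1) → ℕ)) × ((Fin (n+1) → ℕ) → ℕ) =>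
      liftSet n p.1.1 p.1.2 p.2) ''
      ((J ×ˢ (Set.univ : Set (Finset (Fin (n+1) → ℕ)))) ×ˢ ((fun f => f ∘ e) '' F₀)), ?_, ?_, ?_⟩
    · rintro X ⟨⟨⟨Y, E⟩, g⟩, hp, rfl⟩
      exact liftSet_mem n Y E g (hJsub (Set.mem_prod.mp (Set.mem_prod.mp hp).1).1)
    · calc Cardinal.mk _
          ≤ Cardinal.mk ↥((J ×ˢ (Set.univ : Set (Finset (Fin (n+1) → ℕ)))) ×ˢ ((fun f => f ∘ e) '' F₀)) :=
            Cardinal.mk_image_le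
        _ = Cardinal.mk ↥(J ×ˢ (Set.univ : Set (Finset (Fin (n+1) → ℕ)))) *
            Cardinal.mk ↥((fun f => f ∘ e) '' F₀) := by
            rw [Cardinal.mk_congr (Equiv.Set.prod _ _)]; simp [Cardinal.mk_prod]
        _ = (Cardinal.mk ↥J * Cardinal.mk ↥(Set.univ : Set (Finset (Fin (n+1) → ℕ)))) *
            Cardinal.mk ↥((fun f => f ∘ e) '' F₀) := by
            rw [Cardinal.mk_congr (Equiv.Set.prod _ _)]; simp [Cardinal.mk_prod]
        _ ≤ (dNumber * dNumber) * dNumber := by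
            refine mul_le_mul' (mul_le_mul' hJcard ?_) ?_
            · rw [Cardinal.mk_univ]
              refine le_trans ?_ aleph0_le_dNumber
              exact Cardinal.mk_le_aleph0
            · exact le_trans Cardinal.mk_image_le (le_of_eq hF₀card)
        _ = dNumber := by
            rw [Cardinal.mul_eq_self aleph0_le_dNumber, Cardinal.mul_eq_self aleph0_le_dNumber]
    · intro A hA
      have hBA : {s : Fin (n + 1) → ℕ | {m : ℕ | Fin.snoc s m ∈ A}.Infinite} ∈ FINpow n := hA
      obtain ⟨Y, hYJ, hBY⟩ := hJcov _ hBA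
      obtain ⟨f, hfF, hls⟩ := hF₀dom ((fun s => fsup {m : ℕ | Fin.snoc s m ∈ A}) ∘ e.symm)
      have hEfin : {s : Fin (n+1) → ℕ | (f ∘ e) s < fsup {m : ℕ | Fin.snoc s m ∈ A}}.Finite := by
        have heq : {s : Fin (n+1) → ℕ | (f ∘ e) s < fsup {m : ℕ | Fin.snoc s m ∈ A}}
            = e ⁻¹' {k : ℕ | f k < ((fun s => fsup {m : ℕ | Fin.snoc s m ∈ A}) ∘ e.symm) k} := by
          ext s
          simp [Set.mem_preimage]
        rw [heq]
        exact hls.preimage (e.injective.injOn)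
      refine ⟨liftSet n Y hEfin.toFinset (f ∘ e), ⟨((Y, hEfin.toFinset), f ∘ e),
        Set.mem_prod.mpr ⟨Set.mem_prod.mpr ⟨hYJ, Set.mem_univ _⟩, ⟨f, hfF, rfl⟩⟩, rfl⟩, ?_⟩
      intro t ht
      show Fin.init t ∈ Y ∪ ↑hEfin.toFinset ∨ t (Fin.last (n+1)) ≤ (f ∘ e) (Fin.init t)
      by_cases hsY : Fin.init t ∈ Y ∪ ↑hEfin.toFinset
      · exact Or.inl hsY
      · right
        rw [Set.mem_union] at hsY
        push_neg at hsY
        obtain ⟨hsY1, hsY2⟩ := hsY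
        have hsB : Fin.init t ∉ {s : Fin (n + 1) → ℕ | {m : ℕ | Fin.snoc s m ∈ A}.Infinite} :=
          fun hc => hsY1 (hBY hc)
        have hsec : {m : ℕ | Fin.snoc (Fin.init t) m ∈ A}.Finite := Set.not_infinite.mp hsB
        have hmem : t (Fin.last (n+1)) ∈ {m : ℕ | Fin.snoc (Fin.init t) m ∈ A} := by
          show Fin.snoc (Fin.init t) (t (Fin.last (n+1))) ∈ A
          rw [Fin.snoc_init_self]
          exact ht
        have h1 : t (Fin.last (n+1)) ≤ fsup {m : ℕ | Fin.snoc (Fin.init t) m ∈ A} :=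
          le_fsup hsec hmem
        have h2 : fsup {m : ℕ | Fin.snoc (Fin.init t) m ∈ A} ≤ (f ∘ e) (Fin.init t) := by
          by_contra hc
          push_neg at hc
          exact hsY2 (by simpa using (hEfin.mem_toFinset.mpr hc))
        exact le_trans h1 h2

/-- `cof(FIN^(n+1)) = 𝔡` for every `n ≥ 1`. -/
theorem idealCof_FINpow_eq_d : ∀ n : ℕ, 1 ≤ n → idealCof (FINpow n) = dNumber := by
  intro n hn
  obtain ⟨k, rfl⟩ : ∃ k, n = k + 1 := ⟨n - 1, (Nat.succ_pred_eq_of_pos hn).symm⟩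
  apply le_antisymm
  · obtain ⟨J, hsub, hcard, hcov⟩ := genFamily (k+1)
    exact le_trans (csInf_le' ⟨J, hsub, rfl, hcov⟩) hcard
  · have hne : {c | ∃ J : Set (Set (Fin (k+2) → ℕ)), J ⊆ FINpow (k+1) ∧ Cardinal.mk J = c ∧
        ∀ A ∈ FINpow (k+1), ∃ X ∈ J, A ⊆ X}.Nonempty :=
      ⟨_, FINpow (k+1), subset_rfl, rfl, fun A hA => ⟨A, hA, subset_rfl⟩⟩
    obtain ⟨J, hsub, hcard, hcov⟩ := csInf_mem hne
    rw [idealCof, ← hcard]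
    exact d_le_gen k J hsub hcov
end

section
/- For every n ≥ 1, every block-splitting family is L_n-splitting; hence μ_n ≤ 𝔟𝔰 = max{𝔟, 𝔰}. -/
/-- The bounding number 𝔟. -/
noncomputable def bNumber : Cardinal :=
  sInf {c | ∃ F : Set (ℕ → ℕ), Cardinal.mk F = c ∧ ∀ g : ℕ → ℕ, ∃ f ∈ F, ¬ LeStar f g}

/-- `S` splits the infinite set `A`. -/
def Splits (S A : Set ℕ) : Prop := (A ∩ S).Infinite ∧ (A \ S).Infinite

/-- A splitting family. -/
def IsSplittingFamily (𝒮 : Set (Set ℕ)) : Prop :=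
  (∀ S ∈ 𝒮, S.Infinite) ∧ ∀ A : Set ℕ, A.Infinite → ∃ S ∈ 𝒮, Splits S A

/-- The splitting number 𝔰. -/
noncomputable def sNumber : Cardinal :=
  sInf {c | ∃ 𝒮 : Set (Set ℕ), IsSplittingFamily 𝒮 ∧ Cardinal.mk 𝒮 = c}

/-- An interval partition is coded by a strictly increasing `e : ℕ → ℕ` with `e 0 = 0`;
the `n`-th interval is `[e n, e (n+1))`. -/
def BlockSplits (S : Set ℕ) (e : ℕ → ℕ) : Prop :=
  {n : ℕ | Set.Ico (e n) (e (n + 1)) ⊆ S}.Infinite ∧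
  {n : ℕ | Set.Ico (e n) (e (n + 1)) ∩ S = ∅}.Infinite

/-- A block-splitting family. -/
def IsBlockSplittingFamily (𝒮 : Set (Set ℕ)) : Prop :=
  (∀ S ∈ 𝒮, S.Infinite) ∧
  ∀ e : ℕ → ℕ, StrictMono e → e 0 = 0 → ∃ S ∈ 𝒮, BlockSplits S e

/-- The block-splitting number 𝔟𝔰. -/
noncomputable def bsNumber : Cardinal :=
  sInf {c | ∃ 𝒮 : Set (Set ℕ), IsBlockSplittingFamily 𝒮 ∧ Cardinal.mk 𝒮 = c}

/-- `f : [ω]^n → ω^{n+1}` (values strictly increasing tuples) belongs to `L_n`: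
no restriction of `f` to the `n`-subsets of an infinite set has image inside a
single cone `C_s` with `s` nonempty. -/
def MemL (n : ℕ) (f : Finset ℕ → (Fin (n + 1) → ℕ)) : Prop :=
  (∀ s : Finset ℕ, s.card = n → StrictMono (f s)) ∧
  ¬ ∃ (X : Set ℕ) (m : ℕ) (_ : 1 ≤ m) (hm : m ≤ n + 1) (t : Fin m → ℕ),
      X.Infinite ∧ ∀ s : Finset ℕ, s.card = n → ↑s ⊆ X →
        ∀ i : Fin m, f s (Fin.castLE hm i) = t i

/-- `S` `L_n`-splits `f`. -/
def LSplits (n : ℕ) (S : Set ℕ) (f : Finset ℕ → (Fin (n + 1) → ℕ)) : Prop :=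
  ∃ X Y : Set ℕ, X.Infinite ∧ Y.Infinite ∧ Disjoint X Y ∧
    (∀ s : Finset ℕ, s.card = n → ↑s ⊆ X → ∀ i, f s i ∈ S) ∧
    (∀ s : Finset ℕ, s.card = n → ↑s ⊆ Y → ∀ i, f s i ∉ S)

/-- An `L_n`-splitting family. -/
def IsLSplittingFamily (n : ℕ) (𝒮 : Set (Set ℕ)) : Prop :=
  (∀ S ∈ 𝒮, S.Infinite) ∧
  ∀ f : Finset ℕ → (Fin (n + 1) → ℕ), MemL n f → ∃ S ∈ 𝒮, LSplits n S f

/-- `μ_n`, the least size of an `L_n`-splitting family. -/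
noncomputable def muNumber (n : ℕ) : Cardinal :=
  sInf {c | ∃ 𝒮 : Set (Set ℕ), IsLSplittingFamily n 𝒮 ∧ Cardinal.mk 𝒮 = c}

/-!
Let `f ∈ L_n`. By Ramsey's theorem there is an infinite `Z` such that for `n`-sets `s ⊆ Z` and
`w ∈ Z \ s`, whether `f(s)ᵢ < w` depends only on `i` and on the gap of `s` containing `w`. Below
`s` the answer is "no": otherwise the first `i + 1` coordinates of `f` would be bounded on an
infinite set, and a second use of Ramsey's theorem would put them in a single cone. Above `s` it is
"yes". So the answer switches across some `x ∈ s`, and `f(s)ᵢ` lies between any point of `Z` in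
the gap just below `x` and any point in the gap just above it. Enumerating `Z` as
`W 0 < W 1 < ⋯`, take the blocks `[W (3k - 1), W (3k + 2))` and the points `ζ k = W (3k + 1)`,
flanked by `W (3k)` and `W (3k + 2)`. For `s ⊆ ran ζ` every `f(s)ᵢ` then lies in the block of some
element of `s`, so if `S` block-splits this partition, the points `ζ k` of the blocks inside `S`
and of those missing `S` witness that `S` `L_n`-splits `f`.

For `𝔟𝔰 = max 𝔟 𝔰`: a block-splitting family is splitting, and its "next element" functions form
an unbounded family. Conversely, let `F` be unbounded and `𝒮` splitting. Each `f ∈ F` generates an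
interval partition, and the unions of its blocks indexed by the sets `S ∈ 𝒮` form a
block-splitting family of size at most `|F| · |𝒮|`.
-/

open Set
open scoped Finset

theorem exists_infinite_homogeneous {C : Type*} [Finite C] (r : ℕ) (c : Finset ℕ → C) {Z : Set ℕ}
    (hZ : Z.Infinite) :
    ∃ Z' ⊆ Z, Z'.Infinite ∧ ∃ k, ∀ s : Finset ℕ, s.card = r → ↑s ⊆ Z' → c s = k := by
  induction r generalizing c Z with
  | zero => exact ⟨Z, subset_rfl, hZ, c ∅, fun s hs _ => by rw [Finset.card_eq_zero.1 hs]⟩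
  | succ r ih =>
    have step : ∀ X : {X : Set ℕ // X.Infinite}, ∃ Y : {Y : Set ℕ // Y.Infinite},
        Y.1 ⊆ X.1 ∩ Ioi (sInf X.1) ∧
          ∃ k, ∀ s : Finset ℕ, s.card = r → ↑s ⊆ Y.1 → c (insert (sInf X.1) s) = k := by
      rintro ⟨X, hX⟩
      obtain ⟨Y, hYX, hY, k, hk⟩ :=
        ih (fun s => c (insert (sInf X) s)) (hX.sdiff (finite_Iic (sInf X)))
      exact ⟨⟨Y, hY⟩, fun y hy => ⟨(hYX hy).1, mem_Ioi.2 (not_le.1 (hYX hy).2)⟩, k, hk⟩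
    choose next hnext col hcol using step
    let X : ℕ → {X : Set ℕ // X.Infinite} := fun m => next^[m] ⟨Z, hZ⟩
    let a : ℕ → ℕ := fun m => sInf (X m).1
    have hX_succ : ∀ m, X (m + 1) = next (X m) := fun m => Function.iterate_succ_apply' _ _ _
    have hX_anti : Antitone fun m => (X m).1 := antitone_nat_of_succ_le fun m => by
      rw [hX_succ]; exact fun y hy => ((hnext _) hy).1
    have ha_mem : ∀ m, a m ∈ (X m).1 := fun m => Nat.sInf_mem (X m).2.nonempty
    have ha_mem_succ : ∀ {m l}, m < l → a l ∈ (next (X m)).1 := fun {m l} h => by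
      rw [← hX_succ]; exact hX_anti h (ha_mem l)
    have ha : StrictMono a := strictMono_nat_of_lt_succ fun m =>
      ((hnext _) (ha_mem_succ (Nat.lt_succ_self m))).2
    obtain ⟨k, hk⟩ := Finite.exists_infinite_fiber fun m => col (X m)
    refine ⟨a '' {m | col (X m) = k}, ?_, (infinite_coe_iff.1 hk).image ha.injective.injOn, k, ?_⟩
    · rintro _ ⟨m, -, rfl⟩
      exact hX_anti (Nat.zero_le m) (ha_mem m)
    · intro t ht htA
      have hne : t.Nonempty := Finset.card_pos.1 (by omega)
      obtain ⟨m, hmk, hm⟩ := htA (t.min'_mem hne)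
      have hrest : ↑(t.erase (a m)) ⊆ (next (X m)).1 := by
        intro y hy
        obtain ⟨hym, hyt⟩ := Finset.mem_erase.1 hy
        obtain ⟨l, -, rfl⟩ := htA hyt
        exact ha_mem_succ (ha.lt_iff_lt.1 (lt_of_le_of_ne (hm ▸ t.min'_le _ hyt) hym.symm))
      rw [← Finset.insert_erase (hm ▸ t.min'_mem hne : a m ∈ t), hcol (X m) _
        (by rw [Finset.card_erase_of_mem (hm ▸ t.min'_mem hne), ht]; rfl) hrest]
      exact hmk

theorem exists_infinite_homogeneous_of_le {ι : Type*} [Finite ι] (r B : ℕ)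
    (c : Finset ℕ → ι → ℕ) {Z : Set ℕ} (hZ : Z.Infinite)
    (hc : ∀ s : Finset ℕ, s.card = r → ↑s ⊆ Z → ∀ i, c s i ≤ B) :
    ∃ X ⊆ Z, X.Infinite ∧ ∃ t : ι → ℕ, ∀ s : Finset ℕ, s.card = r → ↑s ⊆ X → c s = t := by
  obtain ⟨X, hXZ, hX, t, ht⟩ :=
    exists_infinite_homogeneous r (fun s i => Fin.ofNat (B + 1) (c s i)) hZ
  refine ⟨X, hXZ, hX, fun i => t i, fun s hs hsX => funext fun i => ?_⟩
  rw [← congrFun (ht s hs hsX) i, Fin.val_ofNat,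
    Nat.mod_eq_of_lt (Nat.lt_succ_of_le (hc s hs (hsX.trans hXZ) i))]

theorem Finset.strictMonoOn_card_filter_lt {α : Type*} [LinearOrder α] (t : Finset α) :
    StrictMonoOn (fun w => #{x ∈ t | x < w}) t := by
  intro w hw w' _ hlt
  refine Finset.card_lt_card ((Finset.ssubset_iff_of_subset fun x hx => ?_).2 ⟨w, ?_, ?_⟩)
  · simp only [Finset.mem_filter] at hx ⊢
    exact ⟨hx.1, hx.2.trans hlt⟩
  · simpa [hlt] using hw
  · simp

theorem Finset.exists_mem_card_filter_lt_eq {α : Type*} [LinearOrder α] (t : Finset α) {c : ℕ}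
    (hc : c < t.card) : ∃ w ∈ t, #{x ∈ t | x < w} = c := by
  have hmaps : Set.MapsTo (fun w => #{x ∈ t | x < w}) t (Finset.range t.card) := fun w hw =>
    Finset.mem_range.2 (Finset.card_lt_card (Finset.filter_ssubset.2 ⟨w, hw, lt_irrefl w⟩))
  exact Finset.surjOn_of_injOn_of_card_le _ hmaps t.strictMonoOn_card_filter_lt.injOn
    (Finset.card_range _).le (Finset.mem_range.2 hc)

theorem Nat.exists_lt_not_and_succ {P : ℕ → Prop} {n : ℕ} (h0 : ¬ P 0) (hn : P n) :
    ∃ c < n, ¬ P c ∧ P (c + 1) := by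
  induction n with
  | zero => exact absurd hn h0
  | succ n ih =>
    by_cases hP : P n
    · obtain ⟨c, hc, h⟩ := ih hP
      exact ⟨c, by omega, h⟩
    · exact ⟨n, n.lt_succ_self, hP, hn⟩

section GapHomogeneous

variable {ι : Type*} {n : ℕ} {f : Finset ℕ → ι → ℕ} {Z : Set ℕ} {K : ι → ℕ → Prop}

/-- `#{x ∈ s | x < w}` indexes the gap of `s` containing `w`. -/
def IsGapHomogeneous (n : ℕ) (f : Finset ℕ → ι → ℕ) (Z : Set ℕ) (K : ι → ℕ → Prop) : Prop :=
  ∀ s : Finset ℕ, s.card = n → ↑s ⊆ Z → ∀ w ∈ Z, w ∉ s → ∀ i, (f s i < w ↔ K i #{x ∈ s | x < w})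

theorem exists_isGapHomogeneous [Finite ι] (n : ℕ) (f : Finset ℕ → ι → ℕ) :
    ∃ Z : Set ℕ, Z.Infinite ∧ ∃ K, IsGapHomogeneous n f Z K := by
  let χ : Finset ℕ → ι → Fin (n + 1) → Prop := fun t i j =>
    ∃ w ∈ t, #{x ∈ t | x < w} = j ∧ f (t.erase w) i < w
  obtain ⟨Z, -, hZ, K, hK⟩ := exists_infinite_homogeneous (n + 1) χ infinite_univ
  refine ⟨Z, hZ, fun i j => ∃ h : j < n + 1, K i ⟨j, h⟩, fun s hs hsZ w hwZ hws i => ?_⟩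
  have hcount : #{x ∈ insert w s | x < w} = #{x ∈ s | x < w} := by
    rw [Finset.filter_insert, if_neg (lt_irrefl w)]
  have hj : #{x ∈ s | x < w} < n + 1 := (Finset.card_filter_le _ _).trans_lt (hs ▸ n.lt_succ_self)
  have hχ : χ (insert w s) = K := hK _ (by rw [Finset.card_insert_of_notMem hws, hs])
    (by simpa [Set.insert_subset_iff] using ⟨hwZ, hsZ⟩)
  simp only [hj, exists_true_left, ← hχ, χ]
  constructor
  · exact fun h => ⟨w, s.mem_insert_self w, hcount, by rwa [Finset.erase_insert hws]⟩
  · rintro ⟨w', hw', hcount', hlt⟩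
    obtain rfl : w' = w := (insert w s).strictMonoOn_card_filter_lt.injOn hw'
      (s.mem_insert_self w) (hcount'.trans hcount.symm)
    rwa [Finset.erase_insert hws] at hlt

theorem IsGapHomogeneous.last_gap (h : IsGapHomogeneous n f Z K) (hZ : Z.Infinite) (i : ι) :
    K i n := by
  obtain ⟨s, hsZ, hs⟩ := hZ.exists_subset_card_eq n
  obtain ⟨w, hwZ, hw⟩ := hZ.exists_gt (max (s.sup id) (f s i))
  have hsw : ∀ x ∈ s, x < w := fun x hx =>
    ((Finset.le_sup (f := id) hx).trans (le_max_left _ _)).trans_lt hw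
  have := (h s hs hsZ w hwZ (fun hws => lt_irrefl w (hsw w hws)) i).1
    ((le_max_right _ _).trans_lt hw)
  rwa [Finset.filter_true_of_mem hsw, hs] at this

theorem IsGapHomogeneous.exists_mem_Ico (h : IsGapHomogeneous n f Z K) (hZ : Z.Infinite)
    (hK : ∀ i, ¬ K i 0) {s : Finset ℕ} (hs : s.card = n) (hsZ : ↑s ⊆ Z) (i : ι) :
    ∃ x ∈ s, ∀ a ∈ Z, ∀ b ∈ Z, a < x → x < b → (∀ y ∈ s, y ∉ Ico a x ∧ y ∉ Ioc x b) →
      f s i ∈ Ico a b := by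
  obtain ⟨c, hcn, hc, hc_succ⟩ := Nat.exists_lt_not_and_succ (hK i) (h.last_gap hZ i)
  obtain ⟨x, hxs, hxc⟩ := s.exists_mem_card_filter_lt_eq (hs ▸ hcn)
  refine ⟨x, hxs, fun a ha b hb hax hxb hgap => ⟨not_lt.1 fun hlt => hc ?_, ?_⟩⟩
  · have hcount : #{y ∈ s | y < a} = c := by
      rw [← hxc, Finset.filter_congr fun y hy =>
        ⟨fun hya => hya.trans hax, fun hyx => not_le.1 fun hay => (hgap y hy).1 ⟨hay, hyx⟩⟩]
    exact hcount ▸ (h s hs hsZ a ha (fun has => (hgap a has).1 ⟨le_rfl, hax⟩) i).1 hlt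
  · have hcount : #{y ∈ s | y < b} = c + 1 := by
      have : {y ∈ s | y < b} = insert x {y ∈ s | y < x} := by
        ext y
        simp only [Finset.mem_filter, Finset.mem_insert]
        constructor
        · rintro ⟨hy, hyb⟩
          rcases lt_trichotomy y x with hyx | rfl | hxy
          exacts [Or.inr ⟨hy, hyx⟩, Or.inl rfl, absurd ⟨hxy, hyb.le⟩ (hgap y hy).2]
        · rintro (rfl | ⟨hy, hyx⟩)
          exacts [⟨hxs, hxb⟩, ⟨hy, hyx.trans hxb⟩]
      rw [this, Finset.card_insert_of_notMem (by simp), hxc]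
    exact (h s hs hsZ b hb (fun hbs => (hgap b hbs).2 ⟨hxb, le_rfl⟩) i).2 (hcount ▸ hc_succ)

theorem IsGapHomogeneous.exists_partition (h : IsGapHomogeneous n f Z K) (hZ : Z.Infinite)
    (hK : ∀ i, ¬ K i 0) :
    ∃ e : ℕ → ℕ, StrictMono e ∧ e 0 = 0 ∧ ∃ ζ : ℕ → ℕ, StrictMono ζ ∧
      (∀ k, ζ k ∈ Ico (e k) (e (k + 1))) ∧ ∀ s : Finset ℕ, s.card = n → ↑s ⊆ range ζ →
        ∀ i, ∃ k, ζ k ∈ s ∧ f s i ∈ Ico (e k) (e (k + 1)) := by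
  set W := Nat.nth (· ∈ Z)
  have hW : StrictMono W := Nat.nth_strictMono hZ
  have hWZ : ∀ m, W m ∈ Z := Nat.nth_mem_of_infinite hZ
  let e : ℕ → ℕ := fun k => if k = 0 then 0 else W (3 * k - 1)
  have he_succ : ∀ k, e (k + 1) = W (3 * k + 2) := fun k => by
    simp only [e, if_neg k.succ_ne_zero]
    congr 1
  have he_le : ∀ k, e k ≤ W (3 * k) := by
    rintro (_ | k)
    · exact Nat.zero_le _
    · exact he_succ k ▸ hW.monotone (by omega)
  have hζ_mem : ∀ k, W (3 * k + 1) ∈ Ico (e k) (e (k + 1)) := fun k =>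
    ⟨(he_le k).trans (hW.monotone (by omega)), he_succ k ▸ hW (by omega)⟩
  refine ⟨e, strictMono_nat_of_lt_succ fun k => (hζ_mem k).1.trans_lt (hζ_mem k).2, if_pos rfl,
    fun k => W (3 * k + 1), hW.comp fun a b (hab : a < b) => show 3 * a + 1 < 3 * b + 1 by omega,
    hζ_mem, fun s hs hsζ i => ?_⟩
  have hsZ : ↑s ⊆ Z := hsζ.trans (range_subset_iff.2 fun m => hWZ _)
  obtain ⟨_, hxs, hx⟩ := h.exists_mem_Ico hZ hK hs hsZ i
  obtain ⟨k, rfl⟩ := hsζ hxs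
  refine ⟨k, hxs, ?_⟩
  have hgap : ∀ y ∈ s,
      y ∉ Ico (W (3 * k)) (W (3 * k + 1)) ∧ y ∉ Ioc (W (3 * k + 1)) (W (3 * k + 2)) := by
    intro y hy
    obtain ⟨m, rfl⟩ := hsζ hy
    simp only [mem_Ico, mem_Ioc, hW.le_iff_le, hW.lt_iff_lt]
    omega
  have := hx _ (hWZ _) _ (hWZ _) (hW (by omega)) (hW (by omega)) hgap
  exact ⟨(he_le k).trans this.1, he_succ k ▸ this.2⟩

end GapHomogeneous

section LSplitting

variable {n : ℕ} {f : Finset ℕ → Fin (n + 1) → ℕ}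

theorem MemL.exists_lt_apply (hf : MemL n f) {Z : Set ℕ} (hZ : Z.Infinite) (i : Fin (n + 1))
    (B : ℕ) : ∃ s : Finset ℕ, s.card = n ∧ ↑s ⊆ Z ∧ B < f s i := by
  by_contra! hle
  obtain ⟨X, -, hX, t, ht⟩ := exists_infinite_homogeneous_of_le n B
    (fun s (j : Fin (i + 1)) => f s (Fin.castLE i.isLt j)) hZ fun s hs hsZ j =>
      ((hf.1 s hs).monotone (Fin.le_iff_val_le_val.2 (Nat.lt_succ_iff.1 j.isLt))).trans
        (hle s hs hsZ)
  exact hf.2 ⟨X, i + 1, Nat.succ_pos _, i.isLt, t, hX, fun s hs hsX j => congrFun (ht s hs hsX) j⟩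

theorem MemL.not_first_gap {Z : Set ℕ} {K : Fin (n + 1) → ℕ → Prop} (hf : MemL n f)
    (h : IsGapHomogeneous n f Z K) (hZ : Z.Infinite) (i : Fin (n + 1)) : ¬ K i 0 := by
  intro hK
  obtain ⟨s, hs, hsZ, hlt⟩ := hf.exists_lt_apply (hZ.sdiff (finite_Iic (sInf Z))) i (sInf Z)
  have hcount : #{x ∈ s | x < sInf Z} = 0 := by
    rw [Finset.card_eq_zero, Finset.filter_eq_empty_iff]
    exact fun x hx => not_lt.2 (Nat.sInf_le (hsZ hx).1)
  have := (h s hs (hsZ.trans sdiff_subset) _ (Nat.sInf_mem hZ.nonempty)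
    (fun hmem => (hsZ hmem).2 (mem_Iic.2 le_rfl)) i).2 (hcount ▸ hK)
  exact this.not_gt hlt

end LSplitting

section IntervalPartition

variable {e : ℕ → ℕ}

theorem exists_mem_Ico_of_strictMono (he : StrictMono e) {x : ℕ} (hx : e 0 ≤ x) :
    ∃ k, x ∈ Ico (e k) (e (k + 1)) := by
  have := iUnion_Ico_map_succ_eq_Ici (f := e) (fun k => he.monotone (Nat.zero_le k))
    (not_bddAbove_iff.2 fun b =>
      ⟨e (b + 1), mem_range_self _, (Nat.lt_succ_self b).trans_le he.le_apply⟩)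
  have hx' : x ∈ ⋃ k, Ico (e k) (e (Order.succ k)) := this ▸ hx
  simpa using hx'

theorem eq_of_mem_Ico_of_mem_Ico (he : Monotone e) {x k j : ℕ} (hk : x ∈ Ico (e k) (e (k + 1)))
    (hj : x ∈ Ico (e j) (e (j + 1))) : k = j := by
  by_contra hkj
  exact Set.disjoint_left.1 (he.pairwise_disjoint_on_Ico_succ hkj) hk hj

theorem strictMono_iterate_zero {g : ℕ → ℕ} (hg : ∀ x, x < g x) : StrictMono fun k => g^[k] 0 :=
  strictMono_nat_of_lt_succ fun k => by simpa only [Function.iterate_succ_apply'] using hg _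

theorem Set.infinite_of_forall_exists_le_apply {A B : Set ℕ} (g : ℕ → ℕ) (hA : A.Infinite)
    (h : ∀ m ∈ A, ∃ l ∈ B, m ≤ g l) : B.Infinite := by
  intro hB
  obtain ⟨M, hM⟩ := (hB.image g).bddAbove
  refine hA ((finite_Iic M).subset fun m hm => ?_)
  obtain ⟨l, hl, hml⟩ := h m hm
  exact hml.trans (hM (mem_image_of_mem g hl))

theorem Ico_subset_Ico_or_Ico_succ_subset_Ico_succ {p : ℕ → ℕ} {k m : ℕ} (h₁ : p m ≤ e k)
    (h₂ : e (k + 2) ≤ p (m + 2)) :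
    Ico (e k) (e (k + 1)) ⊆ Ico (p m) (p (m + 1)) ∨
      Ico (e (k + 1)) (e (k + 2)) ⊆ Ico (p (m + 1)) (p (m + 2)) := by
  rcases le_or_gt (e (k + 1)) (p (m + 1)) with h | h
  · exact Or.inl (Ico_subset_Ico h₁ h)
  · exact Or.inr (Ico_subset_Ico h.le h₂)

def blockUnion (e : ℕ → ℕ) (A : Set ℕ) : Set ℕ := ⋃ m ∈ A, Ico (e m) (e (m + 1))

theorem Ico_subset_blockUnion {A : Set ℕ} {m : ℕ} (hm : m ∈ A) :
    Ico (e m) (e (m + 1)) ⊆ blockUnion e A :=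
  subset_biUnion_of_mem (u := fun m => Ico (e m) (e (m + 1))) hm

theorem Ico_inter_blockUnion_eq_empty (he : Monotone e) {A : Set ℕ} {m : ℕ} (hm : m ∉ A) :
    Ico (e m) (e (m + 1)) ∩ blockUnion e A = ∅ := by
  refine eq_empty_iff_forall_notMem.2 fun x ⟨hx, hxA⟩ => ?_
  obtain ⟨j, hj, hxj⟩ := mem_iUnion₂.1 hxA
  exact hm (eq_of_mem_Ico_of_mem_Ico he hx hxj ▸ hj)

theorem Set.Infinite.blockUnion (he : StrictMono e) {A : Set ℕ} (hA : A.Infinite) :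
    (blockUnion e A).Infinite :=
  infinite_of_forall_exists_le_apply id hA fun m hm =>
    ⟨e m, Ico_subset_blockUnion hm ⟨le_rfl, he m.lt_succ_self⟩, he.le_apply⟩

end IntervalPartition

def majorant (g : ℕ → ℕ) (x : ℕ) : ℕ := ∑ y ∈ Finset.range (x + 1), (g y + 1)

theorem strictMono_majorant (g : ℕ → ℕ) : StrictMono (majorant g) :=
  strictMono_nat_of_lt_succ fun x => by
    simp only [majorant, Finset.sum_range_succ _ (x + 1)]
    omega

theorem apply_lt_majorant (g : ℕ → ℕ) (x : ℕ) : g x < majorant g x :=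
  Finset.single_le_sum (f := fun y => g y + 1) (fun _ _ => Nat.zero_le _)
    (Finset.self_mem_range_succ x)

theorem lt_majorant (g : ℕ → ℕ) (x : ℕ) : x < majorant g x :=
  calc x < ∑ _y ∈ Finset.range (x + 1), 1 := by simp
    _ ≤ majorant g x := Finset.sum_le_sum fun _ _ => Nat.le_add_left 1 _

theorem blockSplits_blockUnion {e : ℕ → ℕ} (he : Monotone e) {A : Set ℕ} (hA : A.Infinite)
    (hAc : Aᶜ.Infinite) : BlockSplits (blockUnion e A) e :=
  ⟨hA.mono fun _ => Ico_subset_blockUnion, hAc.mono fun _ => Ico_inter_blockUnion_eq_empty he⟩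

theorem isBlockSplittingFamily_setOf_infinite :
    IsBlockSplittingFamily {S : Set ℕ | S.Infinite} := by
  have hEven : {k : ℕ | Even k}.Infinite :=
    infinite_of_forall_exists_gt fun a => ⟨2 * a + 2, ⟨a + 1, by ring⟩, by omega⟩
  have hOdd : {k : ℕ | Even k}ᶜ.Infinite :=
    infinite_of_forall_exists_gt fun a => ⟨2 * a + 1, by simp, by omega⟩
  exact ⟨fun S hS => hS, fun e he _ =>
    ⟨_, hEven.blockUnion he, blockSplits_blockUnion he.monotone hEven hOdd⟩⟩

section Families

variable {𝒮 : Set (Set ℕ)}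

theorem IsBlockSplittingFamily.isSplittingFamily (h : IsBlockSplittingFamily 𝒮) :
    IsSplittingFamily 𝒮 := by
  refine ⟨h.1, fun A hA => ?_⟩
  choose next hnextA hnext using fun x => hA.exists_gt x
  set e : ℕ → ℕ := fun k => (fun x => next x + 1)^[k] 0
  have he : StrictMono e := strictMono_iterate_zero fun x => (hnext x).trans (Nat.lt_succ_self _)
  have hmem : ∀ k, next (e k) ∈ Ico (e k) (e (k + 1)) := fun k => by
    simp only [e, Function.iterate_succ_apply']
    exact ⟨(hnext _).le, Nat.lt_succ_self _⟩
  have hle : ∀ k, k ≤ next (e k) := fun k => he.le_apply.trans (hmem k).1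
  obtain ⟨S, hS, hin, hout⟩ := h.2 e he rfl
  refine ⟨S, hS, infinite_of_forall_exists_le_apply id hin fun k hk =>
    ⟨next (e k), ⟨hnextA _, hk (hmem k)⟩, hle k⟩, infinite_of_forall_exists_le_apply id hout
    fun k hk => ⟨next (e k), ⟨hnextA _, fun hS' => eq_empty_iff_forall_notMem.1 hk _ ⟨hmem k, hS'⟩⟩,
      hle k⟩⟩

theorem IsBlockSplittingFamily.bNumber_le_mk (h : IsBlockSplittingFamily 𝒮) :
    bNumber ≤ Cardinal.mk 𝒮 := by
  choose next hnextS hnext using fun (S : 𝒮) (x : ℕ) => (h.1 S S.2).exists_gt x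
  suffices hF : ∀ g, ∃ f ∈ range next, ¬ LeStar f g by
    have hb : bNumber ≤ Cardinal.mk (range next) := csInf_le' ⟨range next, rfl, hF⟩
    exact hb.trans Cardinal.mk_range_le
  intro g
  set e : ℕ → ℕ := fun k => (majorant g)^[k] 0
  have he_succ : ∀ k, e (k + 1) = majorant g (e k) := fun k => Function.iterate_succ_apply' _ _ _
  have he : StrictMono e := strictMono_iterate_zero (lt_majorant g)
  obtain ⟨S, hS, -, hout⟩ := h.2 e he rfl
  refine ⟨next ⟨S, hS⟩, mem_range_self _, infinite_of_forall_exists_le_apply id hout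
    fun k hk => ⟨e k, ?_, he.le_apply⟩⟩
  have hnot : next ⟨S, hS⟩ (e k) ∉ Ico (e k) (e (k + 1)) := fun hmem =>
    eq_empty_iff_forall_notMem.1 hk _ ⟨hmem, hnextS ⟨S, hS⟩ (e k)⟩
  have : e (k + 1) ≤ next ⟨S, hS⟩ (e k) := not_lt.1 fun hlt => hnot ⟨(hnext _ _).le, hlt⟩
  exact (apply_lt_majorant g (e k)).trans_le (he_succ k ▸ this)

theorem IsBlockSplittingFamily.isLSplittingFamily (h : IsBlockSplittingFamily 𝒮) (n : ℕ) :
    IsLSplittingFamily n 𝒮 := by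
  refine ⟨h.1, fun f hf => ?_⟩
  obtain ⟨Z, hZ, K, hK⟩ := exists_isGapHomogeneous n f
  obtain ⟨e, he, he0, ζ, hζ, hζe, hfe⟩ :=
    hK.exists_partition hZ (hf.not_first_gap hK hZ)
  obtain ⟨S, hS, hin, hout⟩ := h.2 e he he0
  refine ⟨S, hS, ζ '' {k | Ico (e k) (e (k + 1)) ⊆ S}, ζ '' {k | Ico (e k) (e (k + 1)) ∩ S = ∅},
    hin.image hζ.injective.injOn, hout.image hζ.injective.injOn, ?_, ?_, ?_⟩
  · rw [disjoint_image_iff hζ.injective]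
    exact Set.disjoint_left.2 fun k (hin : Ico _ _ ⊆ S) (hout : Ico _ _ ∩ S = ∅) =>
      eq_empty_iff_forall_notMem.1 hout _ ⟨hζe k, hin (hζe k)⟩
  · intro s hs hsX i
    obtain ⟨k, hks, hk⟩ := hfe s hs (hsX.trans (image_subset_range _ _)) i
    obtain ⟨k', hk' : Ico _ _ ⊆ S, hk'k⟩ := hsX hks
    rw [hζ.injective hk'k] at hk'
    exact hk' hk
  · intro s hs hsY i hfS
    obtain ⟨k, hks, hk⟩ := hfe s hs (hsY.trans (image_subset_range _ _)) i
    obtain ⟨k', hk' : Ico _ _ ∩ S = ∅, hk'k⟩ := hsY hks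
    rw [hζ.injective hk'k] at hk'
    exact eq_empty_iff_forall_notMem.1 hk' _ ⟨hk, hfS⟩

end Families

theorem isBlockSplittingFamily_image2_blockUnion {F : Set (ℕ → ℕ)} {𝒮 : Set (Set ℕ)}
    (hF : ∀ g, ∃ f ∈ F, ¬ LeStar f g) (h𝒮 : IsSplittingFamily 𝒮) :
    IsBlockSplittingFamily
      (image2 (fun f S => blockUnion (fun m => (majorant f)^[m] 0) S) F 𝒮) := by
  refine ⟨?_, fun e he _ => ?_⟩
  · rintro _ ⟨f, -, S, hS, rfl⟩
    exact (h𝒮.1 S hS).blockUnion (strictMono_iterate_zero (lt_majorant f))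
  obtain ⟨f, hfF, hf⟩ := hF fun x => e (x + 2)
  set p : ℕ → ℕ := fun m => (majorant f)^[m] 0
  have hp : StrictMono p := strictMono_iterate_zero (lt_majorant f)
  have hp_succ : ∀ m, p (m + 1) = majorant f (p m) := fun m => Function.iterate_succ_apply' _ _ _
  set A := {m | ∃ l, Ico (e l) (e (l + 1)) ⊆ Ico (p m) (p (m + 1))}
  -- For `x ∈ [p m, p (m + 1))` with `e (x + 2) < f x`, `[e x, e (x + 2)) ⊆ [p m, p (m + 2))`,
  -- so block `x` or `x + 1` of `e` lies inside a single block of `p`.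
  have hA : A.Infinite := by
    refine infinite_of_forall_exists_gt fun N => ?_
    obtain ⟨x, hx, hNx⟩ := (show {x | e (x + 2) < f x}.Infinite from hf).exists_gt (p (N + 1))
    obtain ⟨m, hm⟩ := exists_mem_Ico_of_strictMono hp (x := x) (Nat.zero_le _)
    have hNm : N < m := by simpa using hp.lt_iff_lt.1 (hNx.trans hm.2)
    have h₂ : e (x + 2) ≤ p (m + 2) := calc
      e (x + 2) ≤ majorant f x := hx.le.trans (apply_lt_majorant f x).le
      _ ≤ majorant f (p (m + 1)) := (strictMono_majorant f).monotone hm.2.le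
      _ = p (m + 2) := (hp_succ _).symm
    rcases Ico_subset_Ico_or_Ico_succ_subset_Ico_succ (hm.1.trans he.le_apply) h₂ with h | h
    · exact ⟨m, ⟨x, h⟩, hNm⟩
    · exact ⟨m + 1, ⟨x + 1, h⟩, by omega⟩
  have hle : ∀ m ∈ A, ∃ l, Ico (e l) (e (l + 1)) ⊆ Ico (p m) (p (m + 1)) ∧ m ≤ e l :=
    fun m ⟨l, hl⟩ => ⟨l, hl, hp.le_apply.trans (hl ⟨le_rfl, he l.lt_succ_self⟩).1⟩
  obtain ⟨S, hS, hin, hout⟩ := h𝒮.2 A hA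
  refine ⟨blockUnion p S, mem_image2_of_mem hfF hS, infinite_of_forall_exists_le_apply e hin ?_,
    infinite_of_forall_exists_le_apply e hout ?_⟩
  · rintro m ⟨hmA, hmS⟩
    obtain ⟨l, hl, hml⟩ := hle m hmA
    exact ⟨l, hl.trans (Ico_subset_blockUnion hmS), hml⟩
  · rintro m ⟨hmA, hmS⟩
    obtain ⟨l, hl, hml⟩ := hle m hmA
    refine ⟨l, subset_empty_iff.1 ?_, hml⟩
    rw [← Ico_inter_blockUnion_eq_empty hp.monotone hmS]
    exact inter_subset_inter_left _ hl

theorem exists_unbounded_mk_eq_bNumber :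
    ∃ F : Set (ℕ → ℕ), Cardinal.mk F = bNumber ∧ ∀ g, ∃ f ∈ F, ¬ LeStar f g :=
  csInf_mem (s := {c | ∃ F : Set (ℕ → ℕ), Cardinal.mk F = c ∧ ∀ g, ∃ f ∈ F, ¬ LeStar f g})
    ⟨_, univ, rfl, fun g => ⟨fun x => g x + 1, mem_univ _, fun h =>
      infinite_univ (h.subset fun x _ => Nat.lt_succ_self (g x))⟩⟩

theorem exists_mk_eq_sInf_mk {α : Type} {P : Set α → Prop} (h : ∃ X, P X) :
    ∃ X, P X ∧ Cardinal.mk X = sInf {c | ∃ X, P X ∧ Cardinal.mk X = c} :=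
  let ⟨X, hX⟩ := h
  csInf_mem (s := {c | ∃ X, P X ∧ Cardinal.mk X = c}) ⟨_, X, hX, rfl⟩

theorem exists_isSplittingFamily_mk_eq_sNumber :
    ∃ 𝒮 : Set (Set ℕ), IsSplittingFamily 𝒮 ∧ Cardinal.mk 𝒮 = sNumber :=
  exists_mk_eq_sInf_mk ⟨_, isBlockSplittingFamily_setOf_infinite.isSplittingFamily⟩

theorem exists_isBlockSplittingFamily_mk_eq_bsNumber :
    ∃ 𝒮 : Set (Set ℕ), IsBlockSplittingFamily 𝒮 ∧ Cardinal.mk 𝒮 = bsNumber :=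
  exists_mk_eq_sInf_mk ⟨_, isBlockSplittingFamily_setOf_infinite⟩

theorem Set.Finite.exists_forall_leStar {F : Set (ℕ → ℕ)} (hF : F.Finite) :
    ∃ g, ∀ f ∈ F, LeStar f g :=
  ⟨fun x => hF.toFinset.sup (· x), fun _ hf => finite_empty.subset fun x hx =>
    not_lt.2 (Finset.le_sup (f := (· x)) (hF.mem_toFinset.2 hf)) hx⟩

theorem aleph0_le_bNumber : Cardinal.aleph0 ≤ bNumber := by
  obtain ⟨F, hFmk, hF⟩ := exists_unbounded_mk_eq_bNumber
  have hFinf : F.Infinite := fun hfin =>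
    let ⟨g, hg⟩ := hfin.exists_forall_leStar
    let ⟨f, hf, hnot⟩ := hF g
    hnot (hg f hf)
  exact hFmk ▸ Cardinal.infinite_iff.1 hFinf.to_subtype

theorem bsNumber_le_max : bsNumber ≤ max bNumber sNumber := by
  obtain ⟨F, hFmk, hF⟩ := exists_unbounded_mk_eq_bNumber
  obtain ⟨𝒮, h𝒮, h𝒮mk⟩ := exists_isSplittingFamily_mk_eq_sNumber
  calc bsNumber ≤ Cardinal.mk (image2 _ F 𝒮) :=
        csInf_le' ⟨_, isBlockSplittingFamily_image2_blockUnion hF h𝒮, rfl⟩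
    _ ≤ Cardinal.mk F * Cardinal.mk 𝒮 := Cardinal.mk_image2_le
    _ = bNumber * sNumber := by rw [hFmk, h𝒮mk]
    _ ≤ max bNumber sNumber := Cardinal.mul_le_max_of_aleph0_le_left aleph0_le_bNumber

/-- For every `n ≥ 1`, every block-splitting family is `L_n`-splitting; hence
`μ_n ≤ 𝔟𝔰 = max {𝔟, 𝔰}`. -/
theorem blockSplitting_is_lSplitting :
    ∀ n : ℕ, 1 ≤ n →
      (∀ 𝒮 : Set (Set ℕ), IsBlockSplittingFamily 𝒮 → IsLSplittingFamily n 𝒮) ∧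
      muNumber n ≤ bsNumber ∧ bsNumber = max bNumber sNumber := by
  intro n _
  obtain ⟨𝒮, h𝒮, h𝒮mk⟩ := exists_isBlockSplittingFamily_mk_eq_bsNumber
  have hs : sNumber ≤ Cardinal.mk 𝒮 := csInf_le' ⟨𝒮, h𝒮.isSplittingFamily, rfl⟩
  have hμ : muNumber n ≤ Cardinal.mk 𝒮 := csInf_le' ⟨𝒮, h𝒮.isLSplittingFamily n, rfl⟩
  refine ⟨fun 𝒮 h => h.isLSplittingFamily n, h𝒮mk ▸ hμ, le_antisymm bsNumber_le_max ?_⟩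
  exact h𝒮mk ▸ max_le h𝒮.bNumber_le_mk hs
end
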